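/- arXiv:2308.15006 — 4 statements merged into one kernel-verified Lean document; each statement's English description precedes it below -/
import Mathlib

section
/- Let b > 0 and β ≥ 0, and let x̃ ∈ R^d with â^T x̃ − β‖x̃‖_M ≤ b for a vector â ∈ R^d, a positive definite matrix M, and weighted norm ‖x‖_M = sqrt(x^T M x). Set α = b/(b + 2β‖x̃‖_M). Then α(â^T x̃ + β‖x̃‖_M) ≤ b. -/
open Matrix

theorem scaled_optimistic_is_pessimistic (d : ℕ) (b β : ℝ) (hb : 0 < b) (hβ : 0 ≤ β)
    (M : Matrix (Fin d) (Fin d) ℝ) (hM : M.PosDef)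
    (ahat xt : Fin d → ℝ)
    (hopt : ahat ⬝ᵥ xt - β * Real.sqrt (xt ⬝ᵥ M.mulVec xt) ≤ b) :
    (b / (b + 2 * β * Real.sqrt (xt ⬝ᵥ M.mulVec xt))) *
      (ahat ⬝ᵥ xt + β * Real.sqrt (xt ⬝ᵥ M.mulVec xt)) ≤ b := by
  set s := Real.sqrt (xt ⬝ᵥ M.mulVec xt) with hs
  have hs0 : 0 ≤ s := Real.sqrt_nonneg _
  have hden : 0 < b + 2 * β * s := by nlinarith
  rw [div_mul_eq_mul_div, div_le_iff₀ hden]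
  nlinarith
end

section
/- Let (w_k)_{k∈N} be a sequence in R^d with ‖w_k‖ ≤ 1 for all k, let λ ≥ 1 and define W_k = λI + Σ_{s=1}^{k−1} w_s w_s^T. Then for all K, Σ_{k=1}^K ‖w_k‖²_{W_k^{-1}} ≤ 2d log(1 + K/(λd)). -/
/-!
The matrix determinant lemma gives `det W_{k+1} = det W_k * (1 + ‖w_k‖²_{W_k⁻¹})`, so the
sum of `log (1 + ‖w_k‖²_{W_k⁻¹})` telescopes to `log det W_K - d log λ`. Since `W_k ≥ λ I`
with `λ ≥ 1`, each `‖w_k‖²_{W_k⁻¹} ≤ ‖w_k‖² / λ ≤ 1`, and on `[0, 2]` one has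
`x ≤ 2 log (1 + x)`. Finally AM-GM on the eigenvalues bounds `det W_K` by
`(tr W_K / d) ^ d ≤ (λ + K / d) ^ d`.
-/

open Matrix

open Finset in
theorem Real.prod_le_sum_div_card_pow {ι : Type*} (s : Finset ι) {z : ι → ℝ}
    (hz : ∀ i ∈ s, 0 ≤ z i) : ∏ i ∈ s, z i ≤ ((∑ i ∈ s, z i) / #s) ^ #s := by
  rcases s.eq_empty_or_nonempty with rfl | hs
  · simp
  have hcard : (#s : ℝ) ≠ 0 := by positivity
  have amgm := Real.geom_mean_le_arith_mean_weighted s (fun _ => (#s : ℝ)⁻¹) z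
    (fun _ _ => by positivity) (by simp [hcard]) hz
  rw [← mul_sum, inv_mul_eq_div] at amgm
  calc ∏ i ∈ s, z i = (∏ i ∈ s, z i ^ (#s : ℝ)⁻¹) ^ #s := by
        rw [← prod_pow]
        refine prod_congr rfl fun i hi => ?_
        rw [← Real.rpow_natCast, ← Real.rpow_mul (hz i hi), inv_mul_cancel₀ hcard,
          Real.rpow_one]
    _ ≤ _ := pow_le_pow_left₀ (prod_nonneg fun i hi => Real.rpow_nonneg (hz i hi) _) amgm _

theorem Matrix.PosSemidef.det_le_trace_div_card_pow {n : Type*} [Fintype n] [DecidableEq n]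
    {A : Matrix n n ℝ} (hA : A.PosSemidef) :
    A.det ≤ (A.trace / Fintype.card n) ^ Fintype.card n := by
  rw [hA.isHermitian.det_eq_prod_eigenvalues, hA.isHermitian.trace_eq_sum_eigenvalues]
  simpa using Real.prod_le_sum_div_card_pow Finset.univ fun i _ => hA.eigenvalues_nonneg i

theorem Matrix.det_add_vecMulVec {m α : Type*} [Fintype m] [DecidableEq m] [CommRing α]
    {A : Matrix m m α} (hA : IsUnit A.det) (u v : m → α) :
    (A + vecMulVec u v).det = A.det * (1 + v ⬝ᵥ A⁻¹ *ᵥ u) := by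
  rw [vecMulVec_eq Unit, det_add_replicateCol_mul_replicateRow hA, Matrix.mul_assoc,
    ← replicateCol_mulVec, replicateRow_mul_replicateCol]
  simp [det_unique]

theorem Matrix.dotProduct_inv_mulVec_le {n : Type*} [Fintype n] [DecidableEq n]
    {A : Matrix n n ℝ} (hA : IsUnit A.det) {c : ℝ} (hc : 0 < c)
    (hcoer : ∀ x, c * (x ⬝ᵥ x) ≤ x ⬝ᵥ A *ᵥ x) (v : n → ℝ) :
    v ⬝ᵥ A⁻¹ *ᵥ v ≤ (v ⬝ᵥ v) / c := by
  set u := A⁻¹ *ᵥ v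
  have hAu : A *ᵥ u = v := by rw [mulVec_mulVec, mul_nonsing_inv _ hA, one_mulVec]
  have hquad : v ⬝ᵥ u = u ⬝ᵥ A *ᵥ u := by rw [hAu, dotProduct_comm]
  have hcs : (v ⬝ᵥ u) ^ 2 ≤ (v ⬝ᵥ v) * (u ⬝ᵥ u) := by
    simpa [dotProduct, sq] using Finset.sum_mul_sq_le_sq_mul_sq Finset.univ v u
  have huu : 0 ≤ u ⬝ᵥ u := Finset.sum_nonneg fun i _ => mul_self_nonneg _
  have hvv : 0 ≤ v ⬝ᵥ v := Finset.sum_nonneg fun i _ => mul_self_nonneg _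
  have hlow : c * (u ⬝ᵥ u) ≤ v ⬝ᵥ u := hquad ▸ hcoer u
  have hq : 0 ≤ v ⬝ᵥ u := (mul_nonneg hc.le huu).trans hlow
  rw [le_div_iff₀ hc]
  nlinarith [mul_le_mul_of_nonneg_right hcs hc.le, mul_le_mul_of_nonneg_left hlow hvv]

theorem Real.le_two_mul_log_one_add {x : ℝ} (h0 : 0 ≤ x) (h2 : x ≤ 2) :
    x ≤ 2 * Real.log (1 + x) := by
  have hx : x ≤ 2 * (2 * x / (x + 2)) := by
    rw [mul_div_assoc', le_div_iff₀ (by linarith)]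
    nlinarith
  linarith [Real.le_log_one_add_of_nonneg h0]

theorem Matrix.posSemidef_sum_vecMulVec_self {ι n : Type*} [Fintype n] (t : Finset ι)
    (w : ι → n → ℝ) : (∑ s ∈ t, vecMulVec (w s) (w s)).PosSemidef :=
  posSemidef_sum _ fun s _ => by simpa using posSemidef_vecMulVec_self_star (w s)

open Finset in
noncomputable def regularizedGram {n : Type*} [Fintype n] [DecidableEq n] (lam : ℝ)
    (w : ℕ → n → ℝ) (k : ℕ) : Matrix n n ℝ :=
  lam • 1 + ∑ s ∈ range k, vecMulVec (w s) (w s)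

namespace regularizedGram

open Finset

variable {n : Type*} [Fintype n] [DecidableEq n] {lam : ℝ} {w : ℕ → n → ℝ}

theorem succ (k : ℕ) :
    regularizedGram lam w (k + 1) = regularizedGram lam w k + vecMulVec (w k) (w k) := by
  simp only [regularizedGram, sum_range_succ, add_assoc]

theorem posDef (hlam : 0 < lam) (k : ℕ) : (regularizedGram lam w k).PosDef :=
  (PosDef.one.smul hlam).add_posSemidef (posSemidef_sum_vecMulVec_self _ w)

theorem mul_dotProduct_self_le (k : ℕ) (x : n → ℝ) :
    lam * (x ⬝ᵥ x) ≤ x ⬝ᵥ regularizedGram lam w k *ᵥ x := by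
  have := (posSemidef_sum_vecMulVec_self (range k) w).dotProduct_mulVec_nonneg x
  simp only [star_trivial] at this
  simp only [regularizedGram, add_mulVec, smul_mulVec, one_mulVec, dotProduct_add,
    dotProduct_smul, smul_eq_mul]
  linarith

theorem dotProduct_inv_mulVec_nonneg (hlam : 0 < lam) (k : ℕ) (x : n → ℝ) :
    0 ≤ x ⬝ᵥ (regularizedGram lam w k)⁻¹ *ᵥ x := by
  simpa using (posDef hlam k).posSemidef.inv.dotProduct_mulVec_nonneg x

theorem trace_eq (k : ℕ) :
    (regularizedGram lam w k).trace = lam * Fintype.card n + ∑ s ∈ range k, w s ⬝ᵥ w s := by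
  simp [regularizedGram, trace_sum, trace_vecMulVec]

theorem det_succ (hlam : 0 < lam) (k : ℕ) :
    (regularizedGram lam w (k + 1)).det =
      (regularizedGram lam w k).det * (1 + w k ⬝ᵥ (regularizedGram lam w k)⁻¹ *ᵥ w k) := by
  rw [succ, det_add_vecMulVec (posDef hlam k).det_pos.ne'.isUnit]

theorem log_det (hlam : 0 < lam) (K : ℕ) :
    Real.log (regularizedGram lam w K).det = Fintype.card n * Real.log lam +
      ∑ k ∈ range K, Real.log (1 + w k ⬝ᵥ (regularizedGram lam w k)⁻¹ *ᵥ w k) := by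
  induction K with
  | zero => simp [regularizedGram, Real.log_pow]
  | succ K ih =>
    have hq := dotProduct_inv_mulVec_nonneg (w := w) hlam K (w K)
    rw [det_succ hlam, Real.log_mul (posDef hlam K).det_pos.ne' (by linarith), ih,
      sum_range_succ, add_assoc]

theorem log_det_le (hlam : 0 < lam) (hw : ∀ k, w k ⬝ᵥ w k ≤ 1) (K : ℕ) :
    Real.log (regularizedGram lam w K).det ≤ Fintype.card n * Real.log lam +
      Fintype.card n * Real.log (1 + K / (lam * Fintype.card n)) := by
  rcases (Fintype.card n).eq_zero_or_pos with hd | hd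
  · have : IsEmpty n := Fintype.card_eq_zero_iff.mp hd
    simp
  have htrace : (regularizedGram lam w K).trace ≤ lam * Fintype.card n + K := by
    rw [trace_eq]
    simpa using sum_le_sum fun k (_ : k ∈ range K) => hw k
  have hdet : (regularizedGram lam w K).det ≤
      (lam * (1 + K / (lam * Fintype.card n))) ^ Fintype.card n := by
    refine (posDef hlam K).posSemidef.det_le_trace_div_card_pow.trans (pow_le_pow_left₀ ?_ ?_ _)
    · exact div_nonneg (posDef hlam K).posSemidef.trace_nonneg (Nat.cast_nonneg _)
    · calc (regularizedGram lam w K).trace / Fintype.card n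
          ≤ (lam * Fintype.card n + K) / Fintype.card n := by gcongr
        _ = _ := by field_simp
  calc Real.log (regularizedGram lam w K).det
      ≤ Real.log ((lam * (1 + K / (lam * Fintype.card n))) ^ Fintype.card n) :=
        Real.log_le_log (posDef hlam K).det_pos hdet
    _ = _ := by rw [Real.log_pow, Real.log_mul hlam.ne' (by positivity), mul_add]

end regularizedGram

theorem elliptic_potential (d : ℕ) (w : ℕ → Fin d → ℝ)
    (hw : ∀ k, Real.sqrt (w k ⬝ᵥ w k) ≤ 1) (lam : ℝ) (hlam : 1 ≤ lam)
    (W : ℕ → Matrix (Fin d) (Fin d) ℝ)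
    (hW : ∀ k, W k = lam • (1 : Matrix (Fin d) (Fin d) ℝ) +
      ∑ s ∈ Finset.range k, Matrix.vecMulVec (w s) (w s)) :
    ∀ K : ℕ, ∑ k ∈ Finset.range K, w k ⬝ᵥ (W k)⁻¹.mulVec (w k) ≤
      2 * d * Real.log (1 + K / (lam * d)) := by
  intro K
  obtain rfl : W = regularizedGram lam w := funext hW
  have hlam0 : 0 < lam := by linarith
  have hnorm : ∀ k, w k ⬝ᵥ w k ≤ 1 := fun k => Real.sqrt_le_one.mp (hw k)
  have hstep : ∀ k, w k ⬝ᵥ (regularizedGram lam w k)⁻¹ *ᵥ w k ≤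
      2 * Real.log (1 + w k ⬝ᵥ (regularizedGram lam w k)⁻¹ *ᵥ w k) := by
    intro k
    refine Real.le_two_mul_log_one_add (regularizedGram.dotProduct_inv_mulVec_nonneg hlam0 k _) ?_
    calc _ ≤ (w k ⬝ᵥ w k) / lam := dotProduct_inv_mulVec_le
          (regularizedGram.posDef hlam0 k).det_pos.ne'.isUnit hlam0
          (regularizedGram.mul_dotProduct_self_le k) (w k)
      _ ≤ 2 := (div_le_one_of_le₀ ((hnorm k).trans hlam) hlam0.le).trans one_le_two
  have hlog := regularizedGram.log_det (w := w) hlam0 K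
  have hlog_le := regularizedGram.log_det_le hlam0 hnorm K
  rw [Fintype.card_fin] at hlog hlog_le
  calc _ ≤ ∑ k ∈ Finset.range K,
          2 * Real.log (1 + w k ⬝ᵥ (regularizedGram lam w k)⁻¹ *ᵥ w k) :=
        Finset.sum_le_sum fun k _ => hstep k
    _ ≤ _ := by rw [← Finset.mul_sum]; linarith
end

section
/- Let G ⊆ R^n be convex with rB ⊆ G for r > 0, let u ∈ G, and let β, w ≥ 0 with u ∈ H := c + βw B_∞ for some c ∈ R^n (where B_∞ is the unit ∞-norm ball). Set α = r/(r + 2√n β w). Then the set αc + αβw B_∞ is contained in G. -/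
theorem scaled_box_in_convex_set (n : ℕ) (G : Set (EuclideanSpace ℝ (Fin n))) (r : ℝ)
    (hG : Convex ℝ G) (hr : 0 < r) (hball : Metric.closedBall 0 r ⊆ G)
    (u c : EuclideanSpace ℝ (Fin n)) (hu : u ∈ G) (β w : ℝ) (hβ : 0 ≤ β) (hw : 0 ≤ w)
    (huH : ∀ i, |u i - c i| ≤ β * w) :
    ∀ y : EuclideanSpace ℝ (Fin n),
      (∀ i, |y i - (r / (r + 2 * Real.sqrt n * β * w)) * c i| ≤
        (r / (r + 2 * Real.sqrt n * β * w)) * β * w) → y ∈ G := by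
  intro y hy
  rcases Nat.eq_zero_or_pos n with hn0 | hn
  · subst hn0
    apply hball
    have hy0 : y = 0 := by ext i; exact i.elim0
    simp [hy0, hr.le]
  have hsqn : (0:ℝ) ≤ Real.sqrt n := Real.sqrt_nonneg _
  obtain ⟨t, ht⟩ : ∃ t, t = 2 * Real.sqrt n * β * w := ⟨_, rfl⟩
  have ht' : t = 2 * Real.sqrt n * (β * w) := by rw [ht]; ring
  have htnn : 0 ≤ t := by rw [ht']; positivity
  have hden : 0 < r + t := by linarith
  obtain ⟨α, hα⟩ : ∃ α, α = r / (r + t) := ⟨_, rfl⟩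
  have hy' : ∀ i, |y i - α * c i| ≤ α * (β * w) := by
    intro i
    have h1 := hy i
    rw [← ht, ← hα] at h1
    calc |y i - α * c i| ≤ α * β * w := h1
      _ = α * (β * w) := by ring
  have hα0 : 0 < α := by rw [hα]; exact div_pos hr hden
  have hα1 : α ≤ 1 := by rw [hα, div_le_one hden]; linarith
  by_cases hs : β * w = 0
  · have ht0 : t = 0 := by rw [ht', hs, mul_zero]
    have hα' : α = 1 := by rw [hα, ht0, add_zero, div_self hr.ne']
    have hyu : y = u := by
      ext i
      have h1 := hy' i
      have h2 := huH i
      rw [hα', hs] at h1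
      rw [hs] at h2
      have e1 : y i = c i := by
        have hn1 : |y i - 1 * c i| = 0 :=
          le_antisymm (by simpa using h1) (abs_nonneg _)
        have := abs_eq_zero.mp hn1
        linarith
      have e2 : u i = c i := by
        have hn2 : |u i - c i| = 0 := le_antisymm h2 (abs_nonneg _)
        have := abs_eq_zero.mp hn2
        linarith
      rw [e1, e2]
    rw [hyu]; exact hu
  · have hswpos : 0 < β * w := lt_of_le_of_ne (by positivity) (Ne.symm hs)
    have hsq : (0:ℝ) < Real.sqrt n := Real.sqrt_pos.mpr (by exact_mod_cast hn)
    have htpos : 0 < t := by rw [ht']; positivity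
    have hα1' : α < 1 := by rw [hα, div_lt_one hden]; linarith
    have h1α : 0 < 1 - α := by linarith
    have hcoord : ∀ i, |y i - α * u i| ≤ 2 * α * (β * w) := by
      intro i
      have h1 := hy' i
      have h2 := huH i
      have habs : |y i - α * u i| ≤ |y i - α * c i| + |α * c i - α * u i| := by
        have := abs_sub_le (y i) (α * c i) (α * u i)
        simpa using this
      have h3 : |α * c i - α * u i| = α * |u i - c i| := by
        rw [abs_sub_comm, ← mul_sub, abs_mul, abs_of_pos hα0]
      have h4 : α * |u i - c i| ≤ α * (β * w) :=
        mul_le_mul_of_nonneg_left h2 hα0.le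
      calc |y i - α * u i| ≤ |y i - α * c i| + |α * c i - α * u i| := habs
        _ ≤ α * (β * w) + α * (β * w) := by rw [h3]; exact add_le_add h1 h4
        _ = 2 * α * (β * w) := by ring
    have hnorm : ‖y - α • u‖ ≤ (1 - α) * r := by
      have key : α * t = (1 - α) * r := by
        rw [hα]; field_simp; ring
      have hb : ‖y - α • u‖ ≤ Real.sqrt n * (2 * α * (β * w)) := by
        rw [EuclideanSpace.norm_eq]
        have hsum : ∑ i, ‖(y - α • u) i‖ ^ 2 ≤ (n : ℝ) * (2 * α * (β * w)) ^ 2 := by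
          calc ∑ i, ‖(y - α • u) i‖ ^ 2 ≤ ∑ _i : Fin n, (2 * α * (β * w)) ^ 2 := by
                apply Finset.sum_le_sum
                intro i _
                have hcd : ‖(y - α • u) i‖ = |y i - α * u i| := by
                  simp [PiLp.sub_apply, PiLp.smul_apply, Real.norm_eq_abs, smul_eq_mul]
                rw [hcd]
                have := hcoord i
                have hnn : (0:ℝ) ≤ |y i - α * u i| := abs_nonneg _
                nlinarith
            _ = (n : ℝ) * (2 * α * (β * w)) ^ 2 := by
                simp [Finset.sum_const, Finset.card_univ]
        calc Real.sqrt (∑ i, ‖(y - α • u) i‖ ^ 2)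
            ≤ Real.sqrt ((n : ℝ) * (2 * α * (β * w)) ^ 2) := Real.sqrt_le_sqrt hsum
          _ = Real.sqrt n * (2 * α * (β * w)) := by
              rw [Real.sqrt_mul (by positivity), Real.sqrt_sq (by positivity)]
      calc ‖y - α • u‖ ≤ Real.sqrt n * (2 * α * (β * w)) := hb
        _ = α * t := by rw [ht']; ring
        _ = (1 - α) * r := key
    set z : EuclideanSpace ℝ (Fin n) := (1 - α)⁻¹ • (y - α • u) with hz
    have hzball : z ∈ Metric.closedBall (0 : EuclideanSpace ℝ (Fin n)) r := by
      rw [Metric.mem_closedBall, dist_zero_right, hz, norm_smul]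
      rw [Real.norm_eq_abs, abs_of_pos (inv_pos.mpr h1α)]
      rw [inv_mul_le_iff₀ h1α]
      linarith [hnorm]
    have hzG : z ∈ G := hball hzball
    have hcomb : α • u + (1 - α) • z = y := by
      rw [hz, smul_smul, mul_inv_cancel₀ h1α.ne', one_smul]
      abel
    rw [← hcomb]
    exact hG hu hzG hα0.le h1α.le (by ring)
end

section
/- Let a ∈ R^d with a^T v ≤ b where b > 0, let â ∈ R^d and β ≥ 0 with |(â − a)^T v| ≤ β‖v‖_M for a positive definite matrix M. Set μ = b/(b + 2β‖v‖_M). Then μ(â^T v + β‖v‖_M) ≤ b. -/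
open Matrix

theorem feasible_scaled_pessimistic (d : ℕ) (a ahat v : Fin d → ℝ) (b β : ℝ)
    (hb : 0 < b) (hβ : 0 ≤ β) (M : Matrix (Fin d) (Fin d) ℝ) (hM : M.PosDef)
    (hfeas : a ⬝ᵥ v ≤ b)
    (hconf : |(ahat - a) ⬝ᵥ v| ≤ β * Real.sqrt (v ⬝ᵥ M.mulVec v)) :
    (b / (b + 2 * β * Real.sqrt (v ⬝ᵥ M.mulVec v))) *
      (ahat ⬝ᵥ v + β * Real.sqrt (v ⬝ᵥ M.mulVec v)) ≤ b := by
  set s : ℝ := β * Real.sqrt (v ⬝ᵥ M.mulVec v) with hs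
  have hs0 : 0 ≤ s := mul_nonneg hβ (Real.sqrt_nonneg _)
  have hsub : (ahat - a) ⬝ᵥ v = ahat ⬝ᵥ v - a ⬝ᵥ v := by
    simp [sub_dotProduct]
  have h1 : ahat ⬝ᵥ v + s ≤ b + 2 * s := by
    have := (abs_le.mp hconf).2
    rw [hsub] at this
    linarith
  have hpos : 0 < b + 2 * s := by linarith
  rw [show b + 2 * β * Real.sqrt (v ⬝ᵥ M.mulVec v) = b + 2 * s by rw [hs]; ring]
  calc b / (b + 2 * s) * (ahat ⬝ᵥ v + s)
      ≤ b / (b + 2 * s) * (b + 2 * s) :=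
        mul_le_mul_of_nonneg_left h1 (div_nonneg hb.le hpos.le)
    _ = b := div_mul_cancel₀ b hpos.ne'
end
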